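/- arXiv:2004.05029 — 4 statements merged into one kernel-verified Lean document; each statement's English description precedes it below -/
import Mathlib

section
/- Let g be a bounded-activity automorphism of X*. Then the set of ends w ∈ X^ω such that the germ of g at w is not a germ of a tail equivalence (i.e., such that g|_v ≠ Id for every finite prefix v of w) is finite; more precisely, it has cardinality at most the activity bound of g. -/
open Function
open scoped Classical

/-- The group of rooted-tree automorphisms of the standard `X`-regular tree `X*`
(vertices are finite words over `X`), as a subgroup of `Equiv.Perm (List X)`:
bijections preserving word length and the prefix relation (equivalently, the root
and the edge relation `(v, vx)`). -/
def treeAut (X : Type*) : Subgroup (Equiv.Perm (List X)) where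
  carrier := {g | (∀ v, (g v).length = v.length) ∧ ∀ v w : List X, v <+: w ↔ g v <+: g w}
  one_mem' := ⟨fun _ => rfl, fun _ _ => Iff.rfl⟩
  mul_mem' := by
    rintro a b ⟨ha1, ha2⟩ ⟨hb1, hb2⟩
    exact ⟨fun v => (ha1 _).trans (hb1 v), fun v w => (hb2 v w).trans (ha2 _ _)⟩
  inv_mem' := by
    rintro g ⟨h1, h2⟩
    constructor
    · intro v
      have := h1 (g⁻¹ v)
      simpa using this.symm
    · intro v w
      have := h2 (g⁻¹ v) (g⁻¹ w)
      simpa using this.symm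

/-- The section `g|_v` of a tree automorphism `g` along the word `v`,
characterized by `g (v ++ w) = g v ++ (sect g v) w`. (Junk value `1` if `g`
is not a tree automorphism.) -/
noncomputable def sect {X : Type*} (g : Equiv.Perm (List X)) (v : List X) :
    Equiv.Perm (List X) :=
  if hg : g ∈ treeAut X then
    { toFun := fun w => (g (v ++ w)).drop v.length
      invFun := fun w => (g⁻¹ (g v ++ w)).drop v.length
      left_inv := by
        intro w
        show (g⁻¹ (g v ++ (g (v ++ w)).drop v.length)).drop v.length = w
        obtain ⟨t, ht⟩ := (hg.2 v (v ++ w)).mp ⟨w, rfl⟩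
        have h2 : (g (v ++ w)).drop v.length = t := by
          rw [← ht, ← hg.1 v, List.drop_left]
        rw [h2, ht]
        simp
      right_inv := by
        intro w
        show (g (v ++ (g⁻¹ (g v ++ w)).drop v.length)).drop v.length = w
        have hginv := (treeAut X).inv_mem hg
        have h3 : v <+: g⁻¹ (g v ++ w) := by
          have := (hginv.2 (g v) (g v ++ w)).mp ⟨w, rfl⟩
          simpa using this
        obtain ⟨t, ht⟩ := h3
        have h4 : (g⁻¹ (g v ++ w)).drop v.length = t := by
          rw [← ht, List.drop_left]
        rw [h4, ht]
        simp [← hg.1 v, List.drop_left] }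
  else 1

/-- Words of length `1` are identified with letters. -/
def singletonEquiv (X : Type*) : {l : List X // l.length = 1} ≃ X where
  toFun l := l.1.head (by
    intro h
    have := l.2
    rw [h] at this
    simp at this)
  invFun x := ⟨[x], rfl⟩
  left_inv := by
    rintro ⟨l, hl⟩
    obtain ⟨x, rfl⟩ : ∃ x, l = [x] := List.length_eq_one_iff.mp hl
    rfl
  right_inv x := rfl

/-- The permutation `ρₙ(g)` of level `n` induced by a tree automorphism. -/
noncomputable def levelPerm {X : Type*} (g : Equiv.Perm (List X)) (n : ℕ) :
    Equiv.Perm {v : List X // v.length = n} :=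
  if hg : g ∈ treeAut X then
    g.subtypePerm (fun v => by rw [hg.1 v])
  else 1

/-- `ρ₁(g)`, the permutation of the alphabet induced by the first-level action. -/
noncomputable def rho1 {X : Type*} (g : Equiv.Perm (List X)) : Equiv.Perm X :=
  (singletonEquiv X).permCongr (levelPerm g 1)

/-- The length-`n` prefix of an end `w ∈ X^ω`. -/
def prefixList {X : Type*} (w : ℕ → X) (n : ℕ) : List X :=
  List.ofFn (fun i : Fin n => w i)

private lemma exists_inj_prefix {X : Type*} (t : Finset (ℕ → X)) :
    ∃ n, Set.InjOn (fun w => prefixList w n) (t : Set (ℕ → X)) := by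
  classical
  have key : ∀ w w' : ℕ → X, w ≠ w' → ∃ k, w k ≠ w' k := by
    intro w w' h
    by_contra hc
    push_neg at hc
    exact h (funext hc)
  refine ⟨(t ×ˢ t).sup (fun p =>
      if h : p.1 = p.2 then 0 else Nat.find (key _ _ h) + 1), ?_⟩
  set N := (t ×ˢ t).sup (fun p =>
      if h : p.1 = p.2 then 0 else Nat.find (key _ _ h) + 1) with hN
  intro w hw w' hw' heq
  by_contra hne
  apply Nat.find_spec (key w w' hne)
  have hmem : (w, w') ∈ t ×ˢ t :=
    Finset.mem_product.mpr ⟨Finset.mem_coe.mp hw, Finset.mem_coe.mp hw'⟩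
  have hle := Finset.le_sup (f := fun p : (ℕ → X) × (ℕ → X) =>
      if h : p.1 = p.2 then 0 else Nat.find (key _ _ h) + 1) hmem
  simp only [dif_neg hne] at hle
  have hlt : Nat.find (key w w' hne) < N := by omega
  have hfun : (fun i : Fin N => w i) = (fun i : Fin N => w' i) :=
    List.ofFn_injective heq
  exact congrFun hfun ⟨_, hlt⟩

/-- For a bounded-activity automorphism `g` with activity bound `c`, the set of
ends `w` such that the germ of `g` at `w` is not a tail-equivalence germ (i.e.
`g|_v ≠ 1` for every finite prefix `v` of `w`) is finite, of cardinality at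
most `c`. -/
theorem bounded_bad_ends_finite {X : Type*} [Countable X]
    (g : Equiv.Perm (List X)) (hg : g ∈ treeAut X) (c : ℕ)
    (hb : ∀ n : ℕ, {v : List X | v.length = n ∧ sect g v ≠ 1}.Finite ∧
      {v : List X | v.length = n ∧ sect g v ≠ 1}.ncard ≤ c) :
    {w : ℕ → X | ∀ n : ℕ, sect g (prefixList w n) ≠ 1}.Finite ∧
    {w : ℕ → X | ∀ n : ℕ, sect g (prefixList w n) ≠ 1}.ncard ≤ c := by
  classical
  set S := {w : ℕ → X | ∀ n : ℕ, sect g (prefixList w n) ≠ 1} with hS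
  have hcard : ∀ t : Finset (ℕ → X), ↑t ⊆ S → t.card ≤ c := by
    intro t ht
    obtain ⟨n, hn⟩ := exists_inj_prefix t
    have himg : t.image (fun w => prefixList w n) ⊆ (hb n).1.toFinset := by
      intro v hv
      obtain ⟨w, hw, rfl⟩ := Finset.mem_image.mp hv
      rw [Set.Finite.mem_toFinset]
      exact ⟨by simp [prefixList], ht (Finset.mem_coe.mpr hw) n⟩
    have h1 := Finset.card_le_card himg
    rw [Finset.card_image_of_injOn hn] at h1
    calc t.card ≤ (hb n).1.toFinset.card := h1
      _ = {v : List X | v.length = n ∧ sect g v ≠ 1}.ncard :=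
        (Set.ncard_eq_toFinset_card _ (hb n).1).symm
      _ ≤ c := (hb n).2
  have hfin : S.Finite := by
    by_contra hinf
    obtain ⟨t, hts, htc⟩ := Set.Infinite.exists_subset_card_eq hinf (c + 1)
    have := hcard t hts
    omega
  refine ⟨hfin, ?_⟩
  rw [Set.ncard_eq_toFinset_card _ hfin]
  exact hcard hfin.toFinset (by simp)
end

section
/- Let N = (X, E, r) be a network (connected locally finite graph with positive resistances) and let Y ⊆ X be a subset with finite edge boundary. Suppose N' is a network on Y obtained from the restriction of N to Y by adding/removing finitely many edges and changing finitely many resistances, and suppose the random walk on N' is recurrent. Then the characteristic function of Y lies in D₀(N), the closure in the Dirichlet space of the finitely supported functions. -/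
open Filter Topology
open scoped ENNReal

/-- `a` is the conductance function of a network: symmetric, nonnegative,
locally finite, and connected. -/
structure IsNetwork {V : Type*} (a : V → V → ℝ) : Prop where
  symm : ∀ x y, a x y = a y x
  nonneg : ∀ x y, 0 ≤ a x y
  locFin : ∀ x, {y | a x y ≠ 0}.Finite
  conn : ∀ x y, Relation.ReflTransGen (fun u v : V => a u v ≠ 0) x y

/-- The Dirichlet energy `D(f) = Σ_{x,y} a(x,y) (f x - f y)²` of `f` on the
network with conductances `a` (each edge counted twice). -/
noncomputable def dirEnergy {V : Type*} (a : V → V → ℝ) (f : V → ℝ) : ℝ≥0∞ :=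
  ∑' x : V, ∑' y : V, ENNReal.ofReal (a x y * (f x - f y) ^ 2)

/-- `f` belongs to `D₀(N)`, the closure of the finitely supported functions in
the Dirichlet space: there are finitely supported `uₙ` converging to `f`
pointwise and in energy. -/
def memD0 {V : Type*} (a : V → V → ℝ) (f : V → ℝ) : Prop :=
  ∃ u : ℕ → V → ℝ,
    (∀ n, (Function.support (u n)).Finite) ∧
    (∀ x, Tendsto (fun n => u n x) atTop (𝓝 (f x))) ∧
    Tendsto (fun n => dirEnergy a (fun x => u n x - f x)) atTop (𝓝 0)

/-- The random walk on the network with conductances `a` is recurrent: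
the constant function `1` lies in `D₀`. -/
def netRecurrent {V : Type*} (a : V → V → ℝ) : Prop :=
  memD0 a (fun _ => 1)

/-- The action of `G` on `Z` is recurrent: for every finitely supported
symmetric probability measure `lam` on `G` and every starting point `z₀`, the
induced random walk on the orbit of `z₀` is recurrent. -/
noncomputable def recurrentAction (G : Type*) [Group G] (Z : Type*) [MulAction G Z] : Prop :=
  ∀ lam : G → ℝ,
    (Function.support lam).Finite → (∀ g, 0 ≤ lam g) → (∀ g, lam g⁻¹ = lam g) →
    (∑ᶠ g, lam g) = 1 →
    ∀ z₀ : Z,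
      netRecurrent (fun y z : MulAction.orbit G z₀ =>
        ∑ᶠ g ∈ {g : G | g • (y : Z) = (z : Z)}, lam g)

/-- If `Y ⊆ X` has finite edge boundary and a finite modification of the
restricted network on `Y` is recurrent, then the characteristic function of
`Y` lies in `D₀` of the ambient network. -/
theorem finite_modification_recurrent_char_memD0 {V : Type*}
    (a : V → V → ℝ) (hnet : IsNetwork a) (Y : Set V)
    (hbd : {p : V × V | p.1 ∈ Y ∧ p.2 ∉ Y ∧ a p.1 p.2 ≠ 0}.Finite)
    (b : Y → Y → ℝ) (hb : IsNetwork b)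
    (hmod : {p : Y × Y | b p.1 p.2 ≠ a p.1.1 p.2.1}.Finite)
    (hrec : netRecurrent b) :
    memD0 a (Set.indicator Y (fun _ => 1)) := by
  classical
  obtain ⟨u, hufin, hupt, huen⟩ := hrec
  set χ : V → ℝ := Set.indicator Y (fun _ => 1) with hχ
  set v : ℕ → V → ℝ := fun n x => if h : x ∈ Y then u n ⟨x, h⟩ else 0 with hv
  set f : ℕ → V → ℝ := fun n x => v n x - χ x with hfdef
  have hfY : ∀ n (x : V) (hx : x ∈ Y), f n x = u n ⟨x, hx⟩ - 1 := by
    intro n x hx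
    simp [hfdef, hv, hχ, Set.indicator_of_mem hx, dif_pos hx]
  have hfnY : ∀ n (x : V), x ∉ Y → f n x = 0 := by
    intro n x hx
    simp [hfdef, hv, hχ, Set.indicator_of_notMem hx, dif_neg hx]
  have hfpt : ∀ x, Tendsto (fun n => f n x) atTop (𝓝 0) := by
    intro x
    by_cases h : x ∈ Y
    · have h1 : (fun n => f n x) = fun n => u n ⟨x, h⟩ - 1 :=
        funext fun n => hfY n x h
      rw [h1]
      have := (hupt ⟨x, h⟩).sub_const 1
      simpa using this
    · have h1 : (fun n => f n x) = fun _ => 0 := funext fun n => hfnY n x h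
      rw [h1]; exact tendsto_const_nhds
  refine ⟨v, ?_, ?_, ?_⟩
  · intro n
    apply Set.Finite.subset ((hufin n).image Subtype.val)
    intro x hx
    simp only [Function.mem_support, hv] at hx
    by_cases h : x ∈ Y
    · refine ⟨⟨x, h⟩, ?_, rfl⟩
      simpa [dif_pos h] using hx
    · simp [dif_neg h] at hx
  · intro x
    by_cases h : x ∈ Y
    · have := hupt ⟨x, h⟩
      simpa [hv, dif_pos h, hχ, Set.indicator_of_mem h] using this
    · simp [hv, dif_neg h, hχ, Set.indicator_of_notMem h]
  · -- energy convergence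
    -- the term function
    set t : ℕ → V × V → ℝ≥0∞ :=
      fun n p => ENNReal.ofReal (a p.1 p.2 * (f n p.1 - f n p.2) ^ 2) with ht
    -- embedding of Y × Y
    set emb : Y × Y → V × V := fun q => ((q.1 : V), (q.2 : V)) with hemb
    have hembinj : Function.Injective emb := by
      rintro ⟨⟨x, hx⟩, ⟨y, hy⟩⟩ ⟨⟨x', hx'⟩, ⟨y', hy'⟩⟩ h
      simp only [hemb, Prod.mk.injEq] at h
      simp [Prod.ext_iff, Subtype.ext_iff, h.1, h.2]
    -- bad set
    set B : Set (V × V) :=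
      emb '' {q : Y × Y | b q.1 q.2 ≠ a q.1.1 q.2.1} ∪
        {p : V × V | p.1 ∈ Y ∧ p.2 ∉ Y ∧ a p.1 p.2 ≠ 0} ∪
        {p : V × V | p.1 ∉ Y ∧ p.2 ∈ Y ∧ a p.1 p.2 ≠ 0} with hB
    have hBfin : B.Finite := by
      refine ((hmod.image emb).union hbd).union ?_
      refine (hbd.image Prod.swap).subset ?_
      rintro ⟨x, y⟩ ⟨hx, hy, hne⟩
      exact ⟨(y, x), ⟨hy, hx, by rwa [hnet.symm]⟩, rfl⟩
    -- the comparison function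
    set G : ℕ → V × V → ℝ≥0∞ := fun n p =>
      if h : p.1 ∈ Y ∧ p.2 ∈ Y then
        ENNReal.ofReal (b ⟨p.1, h.1⟩ ⟨p.2, h.2⟩ * (f n p.1 - f n p.2) ^ 2)
      else 0 with hG
    -- pointwise bound
    have hpt : ∀ n p, t n p ≤ G n p + B.indicator (t n) p := by
      intro n p
      by_cases h1 : p.1 ∈ Y
      · by_cases h2 : p.2 ∈ Y
        · by_cases hba : b ⟨p.1, h1⟩ ⟨p.2, h2⟩ = a p.1 p.2
          · have : t n p = G n p := by
              simp only [ht, hG, dif_pos (⟨h1, h2⟩ : p.1 ∈ Y ∧ p.2 ∈ Y), hba]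
            rw [this]; exact le_self_add
          · have hpB : p ∈ B := by
              refine Or.inl (Or.inl ⟨(⟨p.1, h1⟩, ⟨p.2, h2⟩), hba, rfl⟩)
            rw [Set.indicator_of_mem hpB]; exact le_add_self
        · by_cases ha : a p.1 p.2 = 0
          · simp [ht, ha]
          · have hpB : p ∈ B := Or.inl (Or.inr ⟨h1, h2, ha⟩)
            rw [Set.indicator_of_mem hpB]; exact le_add_self
      · by_cases h2 : p.2 ∈ Y
        · by_cases ha : a p.1 p.2 = 0
          · simp [ht, ha]
          · have hpB : p ∈ B := Or.inr ⟨h1, h2, ha⟩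
            rw [Set.indicator_of_mem hpB]; exact le_add_self
        · have : t n p = 0 := by
            simp [ht, hfnY n p.1 h1, hfnY n p.2 h2]
          simp [this]
    -- sum of G equals the b-energy
    have hGsum : ∀ n, (∑' p : V × V, G n p) = dirEnergy b (fun y => u n y - 1) := by
      intro n
      have hsupp : Function.support (G n) ⊆ Set.range emb := by
        intro p hp
        simp only [Function.mem_support, hG] at hp
        by_cases h : p.1 ∈ Y ∧ p.2 ∈ Y
        · exact ⟨(⟨p.1, h.1⟩, ⟨p.2, h.2⟩), rfl⟩
        · simp [dif_neg h] at hp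
      have := hembinj.tsum_eq hsupp
      rw [← this]
      have hterm : ∀ q : Y × Y, G n (emb q) =
          ENNReal.ofReal (b q.1 q.2 * ((u n q.1 - 1) - (u n q.2 - 1)) ^ 2) := by
        rintro ⟨⟨x, hx⟩, ⟨y, hy⟩⟩
        simp only [hG, hemb, dif_pos (⟨hx, hy⟩ : x ∈ Y ∧ y ∈ Y)]
        rw [hfY n x hx, hfY n y hy]
      rw [tsum_congr hterm, dirEnergy, ← ENNReal.tsum_prod]
    -- the tail sum
    set s : Finset (V × V) := hBfin.toFinset with hs
    have hbad : ∀ n, (∑' p : V × V, B.indicator (t n) p) ≤ ∑ p ∈ s, t n p := by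
      intro n
      rw [tsum_eq_sum (s := s) (fun p hp => Set.indicator_of_notMem
        (fun hpB => hp (hBfin.mem_toFinset.mpr hpB)) _)]
      exact Finset.sum_le_sum fun p _ => Set.indicator_le_self _ _ _
    -- the main bound
    have hmain : ∀ n, dirEnergy a (f n) ≤
        dirEnergy b (fun y => u n y - 1) + ∑ p ∈ s, t n p := by
      intro n
      have h1 : dirEnergy a (f n) = ∑' p : V × V, t n p := by
        rw [dirEnergy, ← ENNReal.tsum_prod]
      rw [h1]
      calc ∑' p : V × V, t n p
          ≤ ∑' p : V × V, (G n p + B.indicator (t n) p) :=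
            ENNReal.tsum_le_tsum (hpt n)
        _ = (∑' p : V × V, G n p) + ∑' p : V × V, B.indicator (t n) p :=
            ENNReal.tsum_add
        _ ≤ dirEnergy b (fun y => u n y - 1) + ∑ p ∈ s, t n p := by
            rw [hGsum n]; exact add_le_add le_rfl (hbad n)
    -- each bad term tends to zero
    have htend : ∀ p : V × V, Tendsto (fun n => t n p) atTop (𝓝 0) := by
      intro p
      have h1 : Tendsto (fun n => a p.1 p.2 * (f n p.1 - f n p.2) ^ 2) atTop
          (𝓝 (a p.1 p.2 * ((0 : ℝ) - 0) ^ 2)) :=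
        (((hfpt p.1).sub (hfpt p.2)).pow 2).const_mul _
      have h2 := ENNReal.tendsto_ofReal h1
      simpa using h2
    have hsum0 : Tendsto (fun n => ∑ p ∈ s, t n p) atTop (𝓝 0) := by
      have := tendsto_finset_sum s (fun p _ => htend p)
      simpa using this
    have hUB : Tendsto (fun n => dirEnergy b (fun y => u n y - 1) + ∑ p ∈ s, t n p)
        atTop (𝓝 0) := by
      have h1 : Tendsto (fun n => dirEnergy b (fun y => u n y - 1)) atTop (𝓝 0) := by
        simpa using huen
      simpa using h1.add hsum0
    have hgoal : (fun n => dirEnergy a fun x => v n x - χ x) = fun n => dirEnergy a (f n) :=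
      rfl
    rw [hgoal]
    exact tendsto_of_tendsto_of_tendsto_of_le_of_le tendsto_const_nhds hUB
      (fun n => zero_le) hmain
end

section
/- Let A and B be groups, L a left A-set, M a left B-set, and suppose the actions of A on L and of B on M are both recurrent (every finitely supported symmetric random walk induced on the set, from every starting point, is recurrent). Then the action of the restricted permutational wreath product (⊕_{l∈L} B) ⋊ A on L × M (where A acts on the first coordinate and the copy of B indexed by l acts on the second coordinate of points (l, m)) is recurrent. -/
open Filter Topology
open scoped ENNReal

/-- The subgroup of finitely supported functions `L → B`
(the direct sum `⊕_{l ∈ L} B`). -/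
def finSupp (L : Type*) (B : Type*) [Group B] : Subgroup (L → B) where
  carrier := {f | (Function.mulSupport f).Finite}
  one_mem' := by simp [Function.mulSupport_one]
  mul_mem' := fun ha hb => Set.Finite.subset (ha.union hb) (Function.mulSupport_mul _ _)
  inv_mem' := fun ha => by simpa using ha

/-- Coordinate permutation automorphism of `⊕_{l ∈ L} B` induced by `a : A`
acting on `L`. -/
def coordPerm {A : Type*} (L : Type*) (B : Type*) [Group A] [Group B] [MulAction A L]
    (a : A) : finSupp L B ≃* finSupp L B where
  toFun f := ⟨fun l => f.1 (a⁻¹ • l), by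
    refine (f.2.image (a • ·)).subset ?_
    intro l hl
    exact ⟨a⁻¹ • l, hl, by simp⟩⟩
  invFun f := ⟨fun l => f.1 (a • l), by
    refine (f.2.image (a⁻¹ • ·)).subset ?_
    intro l hl
    exact ⟨a • l, hl, by simp⟩⟩
  left_inv f := Subtype.ext (funext fun l => by simp)
  right_inv f := Subtype.ext (funext fun l => by simp)
  map_mul' f g := rfl

/-- The permutation action `A →* MulAut (⊕_{l ∈ L} B)` defining the restricted
permutational wreath product `(⊕_{l∈L} B) ⋊ A`. -/
def wreathHom (A : Type*) (L : Type*) (B : Type*) [Group A] [Group B] [MulAction A L] :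
    A →* MulAut (finSupp L B) where
  toFun a := coordPerm L B a
  map_one' := MulEquiv.ext fun f => Subtype.ext (funext fun l => by simp [coordPerm])
  map_mul' a b := MulEquiv.ext fun f => Subtype.ext (funext fun l => by
    simp [coordPerm, MulAut.mul_apply, mul_smul])

/-- The permutation action `A →* MulAut (∏_{l ∈ L} B)` defining the unrestricted
permutational wreath product `(∏_{l∈L} B) ⋊ A`. -/
def permCoord (A : Type*) (L : Type*) (B : Type*) [Group A] [Group B] [MulAction A L] :
    A →* MulAut (L → B) where
  toFun a :=
    { toFun := fun f l => f (a⁻¹ • l)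
      invFun := fun f l => f (a • l)
      left_inv := fun f => funext fun l => by simp
      right_inv := fun f => funext fun l => by simp
      map_mul' := fun f g => rfl }
  map_one' := MulEquiv.ext fun f => funext fun l => by simp
  map_mul' a b := MulEquiv.ext fun f => funext fun l => by
    simp [MulAut.mul_apply, mul_smul]

/-- A (discrete) group is amenable if it admits a left-invariant, finitely
additive probability measure defined on all subsets. -/
def AmenableGroup (G : Type*) [Group G] : Prop :=
  ∃ m : Set G → ℝ,
    (∀ s, 0 ≤ m s) ∧ m Set.univ = 1 ∧
    (∀ s t : Set G, Disjoint s t → m (s ∪ t) = m s + m t) ∧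
    (∀ (g : G) (s : Set G), m ((g * ·) '' s) = m s)

/-- The iterated restricted permutational wreath products of `P ≤ Sym(X)` along `X`:
`IW X P 0 = P` and `IW X P (n+1) = (⊕_{x∈X} IW X P n) ⋊ P`, so `Pₙ = IW X P (n-1)`. -/
def IW (X : Type u) (P : Subgroup (Equiv.Perm X)) : ℕ → GrpCat.{u}
  | 0 => GrpCat.of P
  | n + 1 => GrpCat.of (finSupp X (IW X P n) ⋊[wreathHom ↥P X (IW X P n)] ↥P)


section WreathRecHelpers

open Filter Topology
open scoped ENNReal

lemma wr_finsum_mem_nonneg {α : Type*} {f : α → ℝ} (h : ∀ a, 0 ≤ f a) (s : Set α) :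
    0 ≤ ∑ᶠ a ∈ s, f a := by
  rw [finsum_mem_def]
  exact finsum_nonneg fun a => Set.indicator_nonneg (fun x _ => h x) a

lemma wr_tsum_ofReal_mem {α : Type*} (lam : α → ℝ) (hfin : (Function.support lam).Finite)
    (hpos : ∀ g, 0 ≤ lam g) (s : Set α) :
    ∑' g : s, ENNReal.ofReal (lam g) = ENNReal.ofReal (∑ᶠ g ∈ s, lam g) := by
  have hsf : (s ∩ Function.support lam).Finite := hfin.inter_of_right s
  rw [finsum_mem_eq_sum lam hsf, ENNReal.ofReal_sum_of_nonneg (fun i _ => hpos i),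
    tsum_subtype s (fun g => ENNReal.ofReal (lam g)), tsum_eq_sum (s := hsf.toFinset) ?_]
  · refine Finset.sum_congr rfl fun g hg => ?_
    rw [Set.indicator_of_mem (hsf.mem_toFinset.mp hg).1]
  · intro b hb
    by_cases hbs : b ∈ s
    · have : lam b = 0 := by
        by_contra hne
        exact hb (hsf.mem_toFinset.mpr ⟨hbs, hne⟩)
      simp [Set.indicator, this]
    · simp [Set.indicator, hbs]

lemma wr_tsum_ofReal_eq {α : Type*} (lam : α → ℝ) (hfin : (Function.support lam).Finite)
    (hpos : ∀ g, 0 ≤ lam g) :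
    ∑' g : α, ENNReal.ofReal (lam g) = ENNReal.ofReal (∑ᶠ g, lam g) := by
  rw [← finsum_mem_univ, ← wr_tsum_ofReal_mem lam hfin hpos Set.univ,
    tsum_univ (fun g => ENNReal.ofReal (lam g))]

lemma wr_projFinsum_eq {α β : Type*} [DecidableEq β] (lam : α → ℝ)
    (hfin : (Function.support lam).Finite)
    (r : α → β) (b : β) [DecidablePred fun w => r w = b] :
    ∑ᶠ w ∈ {w | r w = b}, lam w
      = ∑ w ∈ hfin.toFinset.filter (fun w => r w = b), lam w := by
  have hsf : ({w | r w = b} ∩ Function.support lam).Finite := hfin.inter_of_right _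
  rw [finsum_mem_eq_sum lam hsf]
  refine Finset.sum_subset ?_ ?_
  · intro w hw
    have := hsf.mem_toFinset.mp hw
    exact Finset.mem_filter.mpr ⟨hfin.mem_toFinset.mpr this.2, this.1⟩
  · intro w hw hw'
    by_contra hne
    exact hw' (hsf.mem_toFinset.mpr ⟨(Finset.mem_filter.mp hw).2, hne⟩)

lemma wr_projSupp {α β : Type*} [DecidableEq β] (lam : α → ℝ)
    (hfin : (Function.support lam).Finite) (r : α → β) :
    (Function.support fun b => ∑ᶠ w ∈ {w | r w = b}, lam w).Finite := by
  classical
  refine Set.Finite.subset (hfin.toFinset.image r).finite_toSet ?_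
  intro b hb
  rw [Function.mem_support, wr_projFinsum_eq lam hfin r b] at hb
  obtain ⟨w, hw, -⟩ := Finset.exists_ne_zero_of_sum_ne_zero hb
  obtain ⟨hw1, hw2⟩ := Finset.mem_filter.mp hw
  rw [Finset.coe_image]
  exact ⟨w, by simpa using hw1, hw2⟩

lemma wr_projTot {α β : Type*} (lam : α → ℝ) (hfin : (Function.support lam).Finite)
    (r : α → β) :
    (∑ᶠ b, ∑ᶠ w ∈ {w | r w = b}, lam w) = ∑ᶠ w, lam w := by
  classical
  have hsub : Function.support (fun b => ∑ᶠ w ∈ {w | r w = b}, lam w)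
      ⊆ ↑(hfin.toFinset.image r) := by
    intro b hb
    rw [Function.mem_support, wr_projFinsum_eq lam hfin r b] at hb
    obtain ⟨w, hw, -⟩ := Finset.exists_ne_zero_of_sum_ne_zero hb
    obtain ⟨hw1, hw2⟩ := Finset.mem_filter.mp hw
    rw [Finset.coe_image]
    exact ⟨w, by simpa using hw1, hw2⟩
  rw [finsum_eq_finset_sum_of_support_subset _ hsub, finsum_eq_sum lam hfin,
    ← Finset.sum_fiberwise_of_maps_to (g := r) (t := hfin.toFinset.image r)
      (fun w hw => Finset.mem_image_of_mem r hw) lam]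
  refine Finset.sum_congr rfl fun b _ => ?_
  rw [wr_projFinsum_eq lam hfin r b]

lemma wr_tsum_fiber_ofReal {α β : Type*} (lam : α → ℝ)
    (hfin : (Function.support lam).Finite)
    (hpos : ∀ g, 0 ≤ lam g) (r : α → β) (c : β → ℝ) (hc : ∀ b, 0 ≤ c b) :
    ∑' w : α, ENNReal.ofReal (lam w * c (r w))
      = ∑' b : β, ENNReal.ofReal ((∑ᶠ w ∈ {w | r w = b}, lam w) * c b) := by
  rw [← ENNReal.tsum_fiberwise (fun w => ENNReal.ofReal (lam w * c (r w))) r]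
  refine tsum_congr fun b => ?_
  have hset : (r ⁻¹' {b}) = {w | r w = b} := by
    ext w
    simp [Set.mem_preimage]
  calc ∑' w : (r ⁻¹' {b}), ENNReal.ofReal (lam ↑w * c (r ↑w))
      = ∑' w : (r ⁻¹' {b}), ENNReal.ofReal (lam ↑w) * ENNReal.ofReal (c b) := by
        refine tsum_congr fun w => ?_
        have : r (↑w : α) = b := w.2
        rw [this, ENNReal.ofReal_mul (hpos _)]
    _ = ENNReal.ofReal (∑ᶠ w ∈ {w | r w = b}, lam w) * ENNReal.ofReal (c b) := by
        rw [ENNReal.tsum_mul_right]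
        congr 1
        rw [wr_tsum_ofReal_mem lam hfin hpos _, hset]
    _ = ENNReal.ofReal ((∑ᶠ w ∈ {w | r w = b}, lam w) * c b) := by
        rw [← ENNReal.ofReal_mul (wr_finsum_mem_nonneg hpos _)]

lemma wr_sq_split (c p q : ℝ) (hc : 0 ≤ c) :
    ENNReal.ofReal (c * (p + q) ^ 2)
      ≤ 2 * ENNReal.ofReal (c * p ^ 2) + 2 * ENNReal.ofReal (c * q ^ 2) := by
  have h1 : c * (p + q) ^ 2 ≤ 2 * (c * p ^ 2) + 2 * (c * q ^ 2) := by
    nlinarith [sq_nonneg (p - q), sq_nonneg p, sq_nonneg q]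
  calc ENNReal.ofReal (c * (p + q) ^ 2)
      ≤ ENNReal.ofReal (2 * (c * p ^ 2) + 2 * (c * q ^ 2)) := ENNReal.ofReal_le_ofReal h1
    _ = ENNReal.ofReal (2 * (c * p ^ 2)) + ENNReal.ofReal (2 * (c * q ^ 2)) :=
        ENNReal.ofReal_add (by positivity) (by positivity)
    _ = 2 * ENNReal.ofReal (c * p ^ 2) + 2 * ENNReal.ofReal (c * q ^ 2) := by
        rw [ENNReal.ofReal_mul (by norm_num : (0:ℝ) ≤ 2),
          ENNReal.ofReal_mul (by norm_num : (0:ℝ) ≤ 2), ENNReal.ofReal_ofNat]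

lemma wr_core {W OA OB X : Type*} (lam : W → ℝ) (hpos : ∀ w, 0 ≤ lam w)
    (π : X → OA × OB) (hπ : Function.Injective π)
    (act : W → X → X) (sA : W → OA ≃ OA) (τ : W → OA → OB → OB)
    (hcompat : ∀ w x, π (act w x) = (sA w (π x).1, τ w (sA w (π x).1) (π x).2))
    (φ : OA → ℝ) (ψ : OB → ℝ) (EA Bψ C : ℝ≥0∞)
    (hEA : ∑' (l : OA), ∑' (w : W), ENNReal.ofReal (lam w * (φ l - φ (sA w l)) ^ 2) ≤ EA)
    (hBψ : ∑' m : OB, ENNReal.ofReal (ψ m ^ 2) ≤ Bψ)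
    (Λ : Finset OA)
    (hwin : ∀ w, lam w ≠ 0 → ∀ l, l ∉ Λ → τ w l = id)
    (hφbd : ∀ l ∈ Λ, φ l ^ 2 ≤ 2)
    (hτE : ∀ w, lam w ≠ 0 → ∀ l : OA,
      ∑' m : OB, ENNReal.ofReal ((ψ m - ψ (τ w l m)) ^ 2) ≤ C)
    (hsum : ∑' w : W, ENNReal.ofReal (lam w) ≤ 1) :
    ∑' (x : X), ∑' (w : W),
        ENNReal.ofReal (lam w *
          (φ (π x).1 * ψ (π x).2 - φ (π (act w x)).1 * ψ (π (act w x)).2) ^ 2)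
      ≤ 2 * (EA * Bψ) + 4 * ((Λ.card : ℝ≥0∞) * C) := by
  classical
  set P : OA × OB → W → ℝ≥0∞ :=
    fun p w => ENNReal.ofReal (lam w * ((φ p.1 - φ (sA w p.1)) * ψ p.2) ^ 2) with hP
  set Q : OA × OB → W → ℝ≥0∞ :=
    fun p w => ENNReal.ofReal
      (lam w * (φ (sA w p.1) * (ψ p.2 - ψ (τ w (sA w p.1) p.2))) ^ 2) with hQ
  have step1 : ∀ (x : X) (w : W),
      ENNReal.ofReal (lam w *
          (φ (π x).1 * ψ (π x).2 - φ (π (act w x)).1 * ψ (π (act w x)).2) ^ 2)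
        ≤ 2 * P (π x) w + 2 * Q (π x) w := by
    intro x w
    rw [hcompat w x]
    have hd : φ (π x).1 * ψ (π x).2
          - φ (sA w (π x).1, τ w (sA w (π x).1) (π x).2).1
            * ψ (sA w (π x).1, τ w (sA w (π x).1) (π x).2).2
        = (φ (π x).1 - φ (sA w (π x).1)) * ψ (π x).2
          + φ (sA w (π x).1) * (ψ (π x).2 - ψ (τ w (sA w (π x).1) (π x).2)) := by
      dsimp only
      ring
    rw [hd]
    exact wr_sq_split _ _ _ (hpos w)
  have step2 : ∑' (x : X), ∑' (w : W),
        ENNReal.ofReal (lam w *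
          (φ (π x).1 * ψ (π x).2 - φ (π (act w x)).1 * ψ (π (act w x)).2) ^ 2)
      ≤ 2 * (∑' (x : X), ∑' (w : W), P (π x) w)
        + 2 * (∑' (x : X), ∑' (w : W), Q (π x) w) := by
    calc _ ≤ ∑' (x : X), ∑' (w : W), (2 * P (π x) w + 2 * Q (π x) w) :=
          ENNReal.tsum_le_tsum fun x => ENNReal.tsum_le_tsum fun w => step1 x w
      _ = ∑' (x : X), (2 * ∑' (w : W), P (π x) w + 2 * ∑' (w : W), Q (π x) w) := by
          refine tsum_congr fun x => ?_
          rw [ENNReal.tsum_add, ENNReal.tsum_mul_left, ENNReal.tsum_mul_left]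
      _ = _ := by
          rw [ENNReal.tsum_add, ENNReal.tsum_mul_left, ENNReal.tsum_mul_left]
  have inj1 : ∑' (x : X), ∑' (w : W), P (π x) w ≤ ∑' p, ∑' (w : W), P p w :=
    ENNReal.tsum_comp_le_tsum_of_injective hπ (fun p => ∑' w, P p w)
  have inj2 : ∑' (x : X), ∑' (w : W), Q (π x) w ≤ ∑' p, ∑' (w : W), Q p w :=
    ENNReal.tsum_comp_le_tsum_of_injective hπ (fun p => ∑' w, Q p w)
  have HP : ∑' (p : OA × OB), ∑' (w : W), P p w ≤ EA * Bψ := by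
    rw [ENNReal.tsum_prod (f := fun l m => ∑' (w : W), P (l, m) w)]
    have hfac : ∀ (l : OA) (m : OB) (w : W),
        P (l, m) w = ENNReal.ofReal (lam w * (φ l - φ (sA w l)) ^ 2)
          * ENNReal.ofReal (ψ m ^ 2) := by
      intro l m w
      rw [hP]
      dsimp only
      rw [← ENNReal.ofReal_mul (mul_nonneg (hpos w) (sq_nonneg _))]
      ring_nf
    calc ∑' (l : OA), ∑' (m : OB), ∑' (w : W), P (l, m) w
        = ∑' (l : OA), ∑' (m : OB),
            (∑' (w : W), ENNReal.ofReal (lam w * (φ l - φ (sA w l)) ^ 2))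
              * ENNReal.ofReal (ψ m ^ 2) := by
          refine tsum_congr fun l => tsum_congr fun m => ?_
          rw [← ENNReal.tsum_mul_right]
          exact tsum_congr fun w => hfac l m w
      _ = ∑' (l : OA),
            (∑' (w : W), ENNReal.ofReal (lam w * (φ l - φ (sA w l)) ^ 2))
              * ∑' (m : OB), ENNReal.ofReal (ψ m ^ 2) := by
          refine tsum_congr fun l => ?_
          rw [ENNReal.tsum_mul_left]
      _ ≤ ∑' (l : OA),
            (∑' (w : W), ENNReal.ofReal (lam w * (φ l - φ (sA w l)) ^ 2)) * Bψ :=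
          ENNReal.tsum_le_tsum fun l => mul_le_mul_right hBψ _
      _ = (∑' (l : OA), ∑' (w : W), ENNReal.ofReal (lam w * (φ l - φ (sA w l)) ^ 2)) * Bψ :=
          ENNReal.tsum_mul_right
      _ ≤ EA * Bψ := mul_le_mul_left hEA _
  have HQ : ∑' (p : OA × OB), ∑' (w : W), Q p w ≤ 2 * ((Λ.card : ℝ≥0∞) * C) := by
    rw [ENNReal.tsum_comm]
    have hw : ∀ w : W, ∑' (p : OA × OB), Q p w
        ≤ (Λ.card : ℝ≥0∞) * (2 * ENNReal.ofReal (lam w) * C) := by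
      intro w
      have hre : ∑' (p : OA × OB), Q p w
          = ∑' (p : OA × OB),
              ENNReal.ofReal (lam w * (φ p.1 * (ψ p.2 - ψ (τ w p.1 p.2))) ^ 2) := by
        rw [← Equiv.tsum_eq (Equiv.prodCongr (sA w) (Equiv.refl OB))
          (fun p : OA × OB => ENNReal.ofReal (lam w * (φ p.1 * (ψ p.2 - ψ (τ w p.1 p.2))) ^ 2))]
        refine tsum_congr fun p => ?_
        simp only [hQ, Equiv.prodCongr_apply, Equiv.coe_refl, Prod.map_apply, id_eq,
          Prod.map_fst, Prod.map_snd]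
      rw [hre, ENNReal.tsum_prod (f := fun (l : OA) (m : OB) =>
        ENNReal.ofReal (lam w * (φ l * (ψ m - ψ (τ w l m))) ^ 2))]
      have hl : ∀ l : OA,
          ∑' (m : OB), ENNReal.ofReal (lam w * (φ l * (ψ m - ψ (τ w l m))) ^ 2)
            ≤ Set.indicator (↑Λ) (fun _ => 2 * ENNReal.ofReal (lam w) * C) l := by
        intro l
        by_cases h0 : lam w = 0
        · have : ∀ m : OB,
              ENNReal.ofReal (lam w * (φ l * (ψ m - ψ (τ w l m))) ^ 2) = 0 := by
            intro m
            simp [h0]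
          rw [tsum_congr this, tsum_zero]
          exact zero_le
        by_cases hl : l ∈ Λ
        · rw [Set.indicator_of_mem (by exact_mod_cast hl)]
          have hfac : ∀ m : OB,
              ENNReal.ofReal (lam w * (φ l * (ψ m - ψ (τ w l m))) ^ 2)
                = ENNReal.ofReal (lam w * φ l ^ 2)
                  * ENNReal.ofReal ((ψ m - ψ (τ w l m)) ^ 2) := by
            intro m
            rw [← ENNReal.ofReal_mul (mul_nonneg (hpos w) (sq_nonneg _))]
            ring_nf
          rw [tsum_congr hfac, ENNReal.tsum_mul_left]
          calc ENNReal.ofReal (lam w * φ l ^ 2)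
                * ∑' (m : OB), ENNReal.ofReal ((ψ m - ψ (τ w l m)) ^ 2)
              ≤ ENNReal.ofReal (lam w * 2) * C := by
                refine mul_le_mul' (ENNReal.ofReal_le_ofReal ?_) (hτE w h0 l)
                exact mul_le_mul_of_nonneg_left (hφbd l hl) (hpos w)
            _ = 2 * ENNReal.ofReal (lam w) * C := by
                rw [mul_comm (lam w) 2, ENNReal.ofReal_mul (by norm_num : (0:ℝ) ≤ 2),
                  ENNReal.ofReal_ofNat]
        · have hid : τ w l = id := hwin w h0 l hl
          have : ∀ m : OB,
              ENNReal.ofReal (lam w * (φ l * (ψ m - ψ (τ w l m))) ^ 2) = 0 := by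
            intro m
            rw [hid]
            simp
          rw [tsum_congr this, tsum_zero]
          exact zero_le
      calc ∑' (l : OA), ∑' (m : OB),
            ENNReal.ofReal (lam w * (φ l * (ψ m - ψ (τ w l m))) ^ 2)
          ≤ ∑' (l : OA), Set.indicator (↑Λ) (fun _ => 2 * ENNReal.ofReal (lam w) * C) l :=
            ENNReal.tsum_le_tsum hl
        _ = ∑ l ∈ Λ, (2 * ENNReal.ofReal (lam w) * C) := by
            rw [tsum_eq_sum (s := Λ) (fun l hl => Set.indicator_of_notMem (by
              exact_mod_cast hl) _)]
            exact Finset.sum_congr rfl fun l hl =>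
              Set.indicator_of_mem (by exact_mod_cast hl) _
        _ = (Λ.card : ℝ≥0∞) * (2 * ENNReal.ofReal (lam w) * C) := by
            rw [Finset.sum_const, nsmul_eq_mul]
    calc ∑' (w : W), ∑' (p : OA × OB), Q p w
        ≤ ∑' (w : W), (Λ.card : ℝ≥0∞) * (2 * ENNReal.ofReal (lam w) * C) :=
          ENNReal.tsum_le_tsum hw
      _ = ∑' (w : W), (2 * (Λ.card : ℝ≥0∞) * C) * ENNReal.ofReal (lam w) := by
          refine tsum_congr fun w => ?_
          ring
      _ = (2 * (Λ.card : ℝ≥0∞) * C) * ∑' (w : W), ENNReal.ofReal (lam w) :=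
          ENNReal.tsum_mul_left
      _ ≤ (2 * (Λ.card : ℝ≥0∞) * C) * 1 := mul_le_mul_right hsum _
      _ = 2 * ((Λ.card : ℝ≥0∞) * C) := by
          rw [mul_one, mul_assoc]
  calc _ ≤ 2 * (∑' (x : X), ∑' (w : W), P (π x) w)
        + 2 * (∑' (x : X), ∑' (w : W), Q (π x) w) := step2
    _ ≤ 2 * (EA * Bψ) + 2 * (2 * ((Λ.card : ℝ≥0∞) * C)) := by
        gcongr
        · exact le_trans inj1 HP
        · exact le_trans inj2 HQ
    _ = 2 * (EA * Bψ) + 4 * ((Λ.card : ℝ≥0∞) * C) := by ring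

variable {G : Type*} [Group G] {Z : Type*} [MulAction G Z]

noncomputable def oAct {z₀ : Z} (g : G) (x : MulAction.orbit G z₀) : MulAction.orbit G z₀ :=
  ⟨g • (x : Z), by
    obtain ⟨h, hh⟩ := x.2
    exact ⟨g * h, by dsimp only at hh ⊢; rw [mul_smul, hh]⟩⟩

@[simp] lemma oAct_coe {z₀ : Z} (g : G) (x : MulAction.orbit G z₀) :
    (oAct g x : Z) = g • (x : Z) := rfl

lemma wr_energy_eq (lam : G → ℝ) (hfin : (Function.support lam).Finite)
    (hpos : ∀ g, 0 ≤ lam g) (z₀ : Z) (v : MulAction.orbit G z₀ → ℝ) :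
    dirEnergy (fun y z : MulAction.orbit G z₀ =>
        ∑ᶠ g ∈ {g : G | g • (y : Z) = (z : Z)}, lam g) v
      = ∑' (x : MulAction.orbit G z₀) (g : G),
          ENNReal.ofReal (lam g * (v x - v (oAct g x)) ^ 2) := by
  unfold dirEnergy
  refine tsum_congr fun x => ?_
  rw [← ENNReal.tsum_fiberwise
    (fun g => ENNReal.ofReal (lam g * (v x - v (oAct g x)) ^ 2)) (fun g => oAct g x)]
  refine tsum_congr fun y => ?_
  dsimp only
  refine Eq.symm ?_
  have hset : ((fun g : G => oAct g x) ⁻¹' {y}) = {g : G | g • (x : Z) = (y : Z)} := by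
    ext g
    simp only [Set.mem_preimage, Set.mem_singleton_iff, Set.mem_setOf_eq, Subtype.ext_iff,
      oAct_coe]
  calc ∑' g : ((fun g : G => oAct g x) ⁻¹' {y}),
        ENNReal.ofReal (lam ↑g * (v x - v (oAct (↑g) x)) ^ 2)
      = ∑' g : ((fun g : G => oAct g x) ⁻¹' {y}),
          ENNReal.ofReal (lam ↑g) * ENNReal.ofReal ((v x - v y) ^ 2) := by
        refine tsum_congr fun g => ?_
        have hg : oAct (↑g : G) x = y := g.2
        rw [hg, ENNReal.ofReal_mul (hpos _)]
    _ = ENNReal.ofReal (∑ᶠ g ∈ {g : G | g • (x : Z) = (y : Z)}, lam g)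
          * ENNReal.ofReal ((v x - v y) ^ 2) := by
        rw [ENNReal.tsum_mul_right]
        congr 1
        rw [wr_tsum_ofReal_mem lam hfin hpos _, hset]
    _ = ENNReal.ofReal ((∑ᶠ g ∈ {g : G | g • (x : Z) = (y : Z)}, lam g) * (v x - v y) ^ 2) := by
        rw [← ENNReal.ofReal_mul (wr_finsum_mem_nonneg hpos _)]

end WreathRecHelpers

/-- If the actions of `A` on `L` and of `B` on `M` are recurrent, then the
action of the restricted permutational wreath product `(⊕_{l∈L} B) ⋊ A` on
`L × M` (by `(f, a) • (l, m) = (a • l, f (a • l) • m)`) is recurrent. -/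
theorem wreath_action_recurrent {A B L M : Type*}
    [Group A] [Group B] [MulAction A L] [MulAction B M]
    (hA : recurrentAction A L) (hB : recurrentAction B M)
    [inst : MulAction (finSupp L B ⋊[wreathHom A L B] A) (L × M)]
    (hact : ∀ (f : finSupp L B) (a : A) (l : L) (m : M),
      (⟨f, a⟩ : finSupp L B ⋊[wreathHom A L B] A) • ((l, m) : L × M) =
        (a • l, (f : L → B) (a • l) • m)) :
    recurrentAction (finSupp L B ⋊[wreathHom A L B] A) (L × M) := by
  classical
  intro lam hfin hpos hsymm hsum z₀
  obtain ⟨l₀, m₀⟩ := z₀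
  -- the smul in components
  have hact' : ∀ (w : finSupp L B ⋊[wreathHom A L B] A) (z : L × M),
      w • z = (w.right • z.1, (w.left : L → B) (w.right • z.1) • z.2) :=
    fun w z => hact w.left w.right z.1 z.2
  -- projections to the coordinate orbits
  have memA : ∀ x : MulAction.orbit (finSupp L B ⋊[wreathHom A L B] A) ((l₀, m₀) : L × M),
      (x : L × M).1 ∈ MulAction.orbit A l₀ := by
    intro x
    obtain ⟨w, hw⟩ := x.2
    dsimp only at hw
    exact ⟨w.right, by rw [← hw, hact']⟩
  have memB : ∀ x : MulAction.orbit (finSupp L B ⋊[wreathHom A L B] A) ((l₀, m₀) : L × M),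
      (x : L × M).2 ∈ MulAction.orbit B m₀ := by
    intro x
    obtain ⟨w, hw⟩ := x.2
    dsimp only at hw
    exact ⟨(w.left : L → B) (w.right • l₀), by rw [← hw, hact']⟩
  set O := MulAction.orbit (finSupp L B ⋊[wreathHom A L B] A) ((l₀, m₀) : L × M) with hO
  set πA : O → MulAction.orbit A l₀ := fun x => ⟨(x : L × M).1, memA x⟩ with hπA
  set πB : O → MulAction.orbit B m₀ := fun x => ⟨(x : L × M).2, memB x⟩ with hπB
  have hπ : Function.Injective (fun x : O => (πA x, πB x)) := by
    intro x y h
    have h1 : (x : L × M).1 = (y : L × M).1 := congrArg (fun p => ((p.1 : MulAction.orbit A l₀) : L)) h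
    have h2 : (x : L × M).2 = (y : L × M).2 := congrArg (fun p => ((p.2 : MulAction.orbit B m₀) : M)) h
    exact Subtype.ext (Prod.ext h1 h2)
  -- the A-shift and the lamp maps
  set sA : (finSupp L B ⋊[wreathHom A L B] A) → (MulAction.orbit A l₀ ≃ MulAction.orbit A l₀) :=
    fun w => {
      toFun := oAct w.right
      invFun := oAct w.right⁻¹
      left_inv := fun l => Subtype.ext (by simp)
      right_inv := fun l => Subtype.ext (by simp) } with hsA
  set τ : (finSupp L B ⋊[wreathHom A L B] A) → MulAction.orbit A l₀ →
      MulAction.orbit B m₀ → MulAction.orbit B m₀ :=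
    fun w l m => oAct ((w.left : L → B) (l : L)) m with hτ
  have hcompat : ∀ (w : finSupp L B ⋊[wreathHom A L B] A) (x : O),
      (fun x : O => (πA x, πB x)) (oAct w x)
        = (sA w ((πA x, πB x)).1, τ w (sA w ((πA x, πB x)).1) ((πA x, πB x)).2) := by
    intro w x
    have h := hact' w (x : L × M)
    refine Prod.ext (Subtype.ext ?_) (Subtype.ext ?_)
    · show ((w • (x : L × M)).1 : L) = w.right • (x : L × M).1
      rw [h]
    · show ((w • (x : L × M)).2 : M) = (w.left : L → B) (w.right • (x : L × M).1) • (x : L × M).2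
      rw [h]
  -- the projected measure on A
  set μ : A → ℝ := fun a =>
    ∑ᶠ w ∈ {w : finSupp L B ⋊[wreathHom A L B] A | w.right = a}, lam w with hμ
  have hμfin : (Function.support μ).Finite := wr_projSupp lam hfin _
  have hμpos : ∀ a, 0 ≤ μ a := fun a => wr_finsum_mem_nonneg hpos _
  have hμsymm : ∀ a, μ a⁻¹ = μ a := by
    intro a
    refine (finsum_mem_eq_of_bijOn (fun w => w⁻¹) ⟨?_, ?_, ?_⟩ (fun w _ => (hsymm w).symm)).symm
    · intro w hw
      show (w⁻¹).right = a⁻¹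
      rw [SemidirectProduct.inv_right, hw]
    · exact (inv_injective).injOn
    · intro w hw
      exact ⟨w⁻¹, by show (w⁻¹).right = a; rw [SemidirectProduct.inv_right, hw, inv_inv], inv_inv w⟩
  have hμtot : (∑ᶠ a, μ a) = 1 := by
    rw [hμ]
    rw [wr_projTot lam hfin _]
    exact hsum
  obtain ⟨φ, hφfin, hφpt, hφen⟩ := hA μ hμfin hμpos hμsymm hμtot l₀
  -- the uniform measure on the finite symmetric set of lamp values
  have hms : ∀ w : finSupp L B ⋊[wreathHom A L B] A,
      (Function.mulSupport ((w.left : L → B))).Finite := fun w => w.left.2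
  set T : Finset (finSupp L B ⋊[wreathHom A L B] A) := hfin.toFinset with hT
  set SS : Finset B := T.biUnion (fun w => ((hms w).toFinset).image (w.left : L → B)) with hSS
  set Sym : Finset B := (SS ∪ SS.image (fun b => b⁻¹)) ∪ {1} with hSym
  have h1Sym : (1 : B) ∈ Sym := by
    rw [hSym]
    exact Finset.mem_union_right _ (Finset.mem_singleton_self 1)
  set K : ℕ := Sym.card with hKdef
  have hKpos : 0 < K := Finset.card_pos.mpr ⟨1, h1Sym⟩
  have hSymInv : ∀ b : B, b ∈ Sym → b⁻¹ ∈ Sym := by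
    intro b hb
    rw [hSym] at hb ⊢
    rcases Finset.mem_union.mp hb with hb | hb
    · rcases Finset.mem_union.mp hb with hb | hb
      · exact Finset.mem_union_left _ (Finset.mem_union_right _
          (Finset.mem_image_of_mem _ hb))
      · obtain ⟨c, hc, rfl⟩ := Finset.mem_image.mp hb
        rw [inv_inv]
        exact Finset.mem_union_left _ (Finset.mem_union_left _ hc)
    · rw [Finset.mem_singleton.mp hb]
      exact Finset.mem_union_right _ (by simp)
  set ν : B → ℝ := fun b => if b ∈ Sym then (K : ℝ)⁻¹ else 0 with hν
  have hνfin : (Function.support ν).Finite := by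
    refine Set.Finite.subset Sym.finite_toSet ?_
    intro b hb
    rw [Function.mem_support, hν] at hb
    by_contra hbs
    exact hb (if_neg hbs)
  have hνpos : ∀ b, 0 ≤ ν b := by
    intro b
    rw [hν]
    dsimp only
    split
    · exact inv_nonneg.mpr (Nat.cast_nonneg K)
    · exact le_refl 0
  have hνsupp : Function.support ν ⊆ ↑Sym := by
    intro b hb
    rw [Function.mem_support, hν] at hb
    by_contra hbs
    exact hb (if_neg hbs)
  have hνsymm : ∀ b, ν b⁻¹ = ν b := by
    intro b
    by_cases hb : b ∈ Sym
    · rw [hν]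
      dsimp only
      rw [if_pos (hSymInv b hb), if_pos hb]
    · have hb' : b⁻¹ ∉ Sym := fun h => hb (by simpa using hSymInv _ h)
      rw [hν]
      dsimp only
      rw [if_neg hb', if_neg hb]
  have hνtot : (∑ᶠ b, ν b) = 1 := by
    rw [finsum_eq_finset_sum_of_support_subset ν hνsupp]
    have : ∀ b ∈ Sym, ν b = (K : ℝ)⁻¹ := by
      intro b hb
      rw [hν]
      exact if_pos hb
    rw [Finset.sum_congr rfl this, Finset.sum_const, nsmul_eq_mul, ← hKdef,
      mul_inv_cancel₀ (Nat.cast_ne_zero.mpr hKpos.ne')]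
  obtain ⟨ψ, hψfin, hψpt, hψen⟩ := hB ν hνfin hνpos hνsymm hνtot m₀
  -- the window of columns where lamps can change
  set ΛL : Finset L := T.biUnion (fun w => (hms w).toFinset) with hΛL
  have hΛfin : ((Subtype.val : MulAction.orbit A l₀ → L) ⁻¹' ↑ΛL).Finite :=
    ΛL.finite_toSet.preimage (Subtype.val_injective.injOn)
  set Λ : Finset (MulAction.orbit A l₀) := hΛfin.toFinset with hΛ
  have hwin : ∀ w, lam w ≠ 0 → ∀ l, l ∉ Λ → τ w l = id := by
    intro w hw l hl
    have hwT : w ∈ T := hfin.mem_toFinset.mpr hw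
    have hlm : (l : L) ∉ Function.mulSupport ((w.left : L → B)) := by
      intro hmem
      refine hl ?_
      rw [hΛ, Set.Finite.mem_toFinset]
      refine Set.mem_preimage.mpr ?_
      rw [hΛL]
      exact_mod_cast Finset.mem_biUnion.mpr ⟨w, hwT, (hms w).mem_toFinset.mpr hmem⟩
    have hone : (w.left : L → B) (l : L) = 1 := by
      by_contra hne
      exact hlm (Function.mem_mulSupport.mpr hne)
    funext m
    rw [hτ]
    exact Subtype.ext (by rw [oAct_coe, hone, one_smul, id_eq])
  -- rewrite the B-orbit energy
  have hEB : ∀ n, dirEnergy (fun y z : MulAction.orbit B m₀ =>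
        ∑ᶠ g ∈ {g : B | g • (y : M) = (z : M)}, ν g) (fun x => ψ n x - 1)
      = ∑' (m : MulAction.orbit B m₀) (b : B),
          ENNReal.ofReal (ν b * (ψ n m - ψ n (oAct b m)) ^ 2) := by
    intro n
    rw [wr_energy_eq ν hνfin hνpos m₀ (fun x => ψ n x - 1)]
    refine tsum_congr fun m => tsum_congr fun b => ?_
    congr 1
    ring
  -- the lamp moves have uniformly comparable energy
  have hτE : ∀ (n : ℕ) (w : finSupp L B ⋊[wreathHom A L B] A), lam w ≠ 0 →
      ∀ l : MulAction.orbit A l₀,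
      ∑' m : MulAction.orbit B m₀, ENNReal.ofReal ((ψ n m - ψ n (τ w l m)) ^ 2)
        ≤ (K : ℝ≥0∞) * dirEnergy (fun y z : MulAction.orbit B m₀ =>
            ∑ᶠ g ∈ {g : B | g • (y : M) = (z : M)}, ν g) (fun x => ψ n x - 1) := by
    intro n w hw l
    by_cases hone : (w.left : L → B) (l : L) = 1
    · have hid : ∀ m, τ w l m = m := by
        intro m
        rw [hτ]
        exact Subtype.ext (by rw [oAct_coe, hone, one_smul])
      refine le_trans (le_of_eq ?_) zero_le
      have hz : ∀ m : MulAction.orbit B m₀,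
          ENNReal.ofReal ((ψ n m - ψ n (τ w l m)) ^ 2) = 0 := by
        intro m
        rw [hid m]
        simp
      rw [tsum_congr hz, tsum_zero]
    · have hwT : w ∈ T := hfin.mem_toFinset.mpr hw
      have hbSS : (w.left : L → B) (l : L) ∈ SS := by
        rw [hSS]
        exact Finset.mem_biUnion.mpr ⟨w, hwT, Finset.mem_image_of_mem _
          ((hms w).mem_toFinset.mpr (Function.mem_mulSupport.mpr hone))⟩
      have hbSym : (w.left : L → B) (l : L) ∈ Sym := by
        rw [hSym]
        exact Finset.mem_union_left _ (Finset.mem_union_left _ hbSS)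
      have hτm : ∀ m, τ w l m = oAct ((w.left : L → B) (l : L)) m := fun m => rfl
      have hKK : ENNReal.ofReal (ν ((w.left : L → B) (l : L))) = ((K : ℝ≥0∞))⁻¹ := by
        rw [hν]
        dsimp only
        rw [if_pos hbSym, ENNReal.ofReal_inv_of_pos (by exact_mod_cast hKpos),
          ENNReal.ofReal_natCast]
      have h1 : ((K : ℝ≥0∞))⁻¹
            * ∑' m : MulAction.orbit B m₀,
                ENNReal.ofReal ((ψ n m - ψ n (τ w l m)) ^ 2)
          ≤ dirEnergy (fun y z : MulAction.orbit B m₀ =>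
              ∑ᶠ g ∈ {g : B | g • (y : M) = (z : M)}, ν g) (fun x => ψ n x - 1) := by
        rw [hEB n]
        calc ((K : ℝ≥0∞))⁻¹ * ∑' m : MulAction.orbit B m₀,
              ENNReal.ofReal ((ψ n m - ψ n (τ w l m)) ^ 2)
            = ∑' m : MulAction.orbit B m₀,
                ENNReal.ofReal (ν ((w.left : L → B) (l : L))
                  * (ψ n m - ψ n (oAct ((w.left : L → B) (l : L)) m)) ^ 2) := by
              rw [← ENNReal.tsum_mul_left]
              refine tsum_congr fun m => ?_
              rw [ENNReal.ofReal_mul (hνpos _), hKK, hτm m]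
          _ ≤ ∑' (m : MulAction.orbit B m₀) (b : B),
                ENNReal.ofReal (ν b * (ψ n m - ψ n (oAct b m)) ^ 2) :=
              ENNReal.tsum_le_tsum fun m => ENNReal.le_tsum _
      calc ∑' m : MulAction.orbit B m₀, ENNReal.ofReal ((ψ n m - ψ n (τ w l m)) ^ 2)
          = (K : ℝ≥0∞) * (((K : ℝ≥0∞))⁻¹
              * ∑' m : MulAction.orbit B m₀,
                  ENNReal.ofReal ((ψ n m - ψ n (τ w l m)) ^ 2)) := by
            rw [← mul_assoc, ENNReal.mul_inv_cancel
              (by exact_mod_cast hKpos.ne') (ENNReal.natCast_ne_top K), one_mul]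
        _ ≤ _ := mul_le_mul_right h1 _
  -- rewrite the A-orbit energy
  have hEA : ∀ j, ∑' (l : MulAction.orbit A l₀) (w : finSupp L B ⋊[wreathHom A L B] A),
        ENNReal.ofReal (lam w * (φ j l - φ j (sA w l)) ^ 2)
      = dirEnergy (fun y z : MulAction.orbit A l₀ =>
          ∑ᶠ g ∈ {g : A | g • (y : L) = (z : L)}, μ g) (fun l => φ j l - 1) := by
    intro j
    rw [wr_energy_eq μ hμfin hμpos l₀ (fun l => φ j l - 1)]
    refine tsum_congr fun l => ?_
    have hs : ∀ w : finSupp L B ⋊[wreathHom A L B] A, sA w l = oAct w.right l := fun w => rfl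
    calc ∑' (w : finSupp L B ⋊[wreathHom A L B] A),
          ENNReal.ofReal (lam w * (φ j l - φ j (sA w l)) ^ 2)
        = ∑' (w : finSupp L B ⋊[wreathHom A L B] A),
            ENNReal.ofReal (lam w *
              (fun a : A => (φ j l - φ j (oAct a l)) ^ 2) (w.right)) := by
          refine tsum_congr fun w => ?_
          rw [hs w]
      _ = ∑' a : A, ENNReal.ofReal ((∑ᶠ w ∈ {w : finSupp L B ⋊[wreathHom A L B] A |
            w.right = a}, lam w) * (fun a : A => (φ j l - φ j (oAct a l)) ^ 2) a) :=
          wr_tsum_fiber_ofReal lam hfin hpos (fun w => w.right)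
            (fun a : A => (φ j l - φ j (oAct a l)) ^ 2) (fun a => sq_nonneg _)
      _ = ∑' a : A, ENNReal.ofReal (μ a * ((φ j l - 1) - (φ j (oAct a l) - 1)) ^ 2) := by
          refine tsum_congr fun a => ?_
          rw [hμ]
          congr 1
          dsimp only
          ring
  -- finiteness of the ψ-mass
  have hBψfin : ∀ n, (∑' m : MulAction.orbit B m₀, ENNReal.ofReal (ψ n m ^ 2)) ≠ ⊤ := by
    intro n
    rw [tsum_eq_sum (s := (hψfin n).toFinset) (fun m hm => by
      have : ψ n m = 0 := by
        by_contra hne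
        exact hm ((hψfin n).mem_toFinset.mpr hne)
      rw [this]
      simp)]
    exact (ENNReal.sum_lt_top.mpr fun m _ => ENNReal.ofReal_lt_top).ne
  -- total mass of lam
  have hsumW : ∑' w : finSupp L B ⋊[wreathHom A L B] A, ENNReal.ofReal (lam w) ≤ 1 := by
    rw [wr_tsum_ofReal_eq lam hfin hpos, hsum]
    simp
  -- diagonal choice
  have hchoice : ∀ n : ℕ, ∃ j, n ≤ j ∧
      (dirEnergy (fun y z : MulAction.orbit A l₀ =>
          ∑ᶠ g ∈ {g : A | g • (y : L) = (z : L)}, μ g) (fun l => φ j l - 1))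
        * (∑' m : MulAction.orbit B m₀, ENNReal.ofReal (ψ n m ^ 2)) ≤ ((n : ℝ≥0∞))⁻¹ ∧
      ∀ l ∈ Λ, (φ j l) ^ 2 ≤ 2 := by
    intro n
    have h1 : Tendsto (fun j => dirEnergy (fun y z : MulAction.orbit A l₀ =>
        ∑ᶠ g ∈ {g : A | g • (y : L) = (z : L)}, μ g) (fun l => φ j l - 1)
          * (∑' m : MulAction.orbit B m₀, ENNReal.ofReal (ψ n m ^ 2)))
        atTop (𝓝 0) := by
      have := ENNReal.Tendsto.mul_const hφen (Or.inr (hBψfin n))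
      simpa using this
    have h2 : ∀ᶠ j in atTop, dirEnergy (fun y z : MulAction.orbit A l₀ =>
        ∑ᶠ g ∈ {g : A | g • (y : L) = (z : L)}, μ g) (fun l => φ j l - 1)
          * (∑' m : MulAction.orbit B m₀, ENNReal.ofReal (ψ n m ^ 2)) ≤ ((n : ℝ≥0∞))⁻¹ :=
      h1.eventually_le_const (ENNReal.inv_pos.mpr (ENNReal.natCast_ne_top n))
    have h3 : ∀ᶠ j in atTop, ∀ l ∈ Λ, (φ j l) ^ 2 ≤ 2 := by
      refine (eventually_all_finite Λ.finite_toSet).2 fun l _ => ?_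
      have hsq : Tendsto (fun j => (φ j l) ^ 2) atTop (𝓝 (1 ^ 2)) := (hφpt l).pow 2
      refine (hsq.eventually_lt_const (by norm_num)).mono fun j hj => le_of_lt hj
    obtain ⟨j, hj⟩ := ((eventually_ge_atTop n).and (h2.and h3)).exists
    exact ⟨j, hj.1, hj.2.1, hj.2.2⟩
  choose k hk using hchoice
  -- the approximating functions
  refine ⟨fun n x => φ (k n) (πA x) * ψ n (πB x), ?_, ?_, ?_⟩
  · -- finite support
    intro n
    have hsub : Function.support (fun x => φ (k n) (πA x) * ψ n (πB x))
        ⊆ (fun x => (πA x, πB x)) ⁻¹'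
          ((Function.support (φ (k n))) ×ˢ (Function.support (ψ n))) := by
      intro x hx
      have h := mul_ne_zero_iff.mp hx
      exact Set.mem_preimage.mpr (Set.mk_mem_prod h.1 h.2)
    exact Set.Finite.subset (((hφfin (k n)).prod (hψfin n)).preimage hπ.injOn) hsub
  · -- pointwise convergence
    intro x
    have hk1 : Tendsto k atTop atTop := tendsto_atTop_mono (fun n => (hk n).1) tendsto_id
    have h := ((hφpt (πA x)).comp hk1).mul (hψpt (πB x))
    simpa using h
  · -- energy convergence
    have hbound : ∀ n, dirEnergy (fun y z : MulAction.orbit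
          (finSupp L B ⋊[wreathHom A L B] A) ((l₀, m₀) : L × M) =>
          ∑ᶠ g ∈ {g : finSupp L B ⋊[wreathHom A L B] A | g • (y : L × M) = (z : L × M)}, lam g)
          (fun x => φ (k n) (πA x) * ψ n (πB x) - 1)
        ≤ 2 * ((n : ℝ≥0∞))⁻¹ + (4 * (Λ.card : ℝ≥0∞) * (K : ℝ≥0∞))
            * dirEnergy (fun y z : MulAction.orbit B m₀ =>
                ∑ᶠ g ∈ {g : B | g • (y : M) = (z : M)}, ν g) (fun x => ψ n x - 1) := by
      intro n
      rw [wr_energy_eq lam hfin hpos ((l₀, m₀) : L × M)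
        (fun x => φ (k n) (πA x) * ψ n (πB x) - 1)]
      have heq : ∀ (x : MulAction.orbit (finSupp L B ⋊[wreathHom A L B] A) ((l₀, m₀) : L × M))
          (w : finSupp L B ⋊[wreathHom A L B] A),
          ENNReal.ofReal (lam w * ((φ (k n) (πA x) * ψ n (πB x) - 1)
              - (φ (k n) (πA (oAct w x)) * ψ n (πB (oAct w x)) - 1)) ^ 2)
            = ENNReal.ofReal (lam w * (φ (k n) (((fun x => (πA x, πB x)) x).1)
                  * ψ n (((fun x => (πA x, πB x)) x).2)
                - φ (k n) (((fun x => (πA x, πB x)) (oAct w x)).1)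
                  * ψ n (((fun x => (πA x, πB x)) (oAct w x)).2)) ^ 2) := by
        intro x w
        congr 1
        ring
      rw [tsum_congr (fun x => tsum_congr (fun w => heq x w))]
      calc ∑' (x : MulAction.orbit (finSupp L B ⋊[wreathHom A L B] A) ((l₀, m₀) : L × M))
            (w : finSupp L B ⋊[wreathHom A L B] A),
            ENNReal.ofReal (lam w * (φ (k n) (((fun x => (πA x, πB x)) x).1)
                  * ψ n (((fun x => (πA x, πB x)) x).2)
                - φ (k n) (((fun x => (πA x, πB x)) (oAct w x)).1)
                  * ψ n (((fun x => (πA x, πB x)) (oAct w x)).2)) ^ 2)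
          ≤ 2 * ((dirEnergy (fun y z : MulAction.orbit A l₀ =>
                ∑ᶠ g ∈ {g : A | g • (y : L) = (z : L)}, μ g) (fun l => φ (k n) l - 1))
              * (∑' m : MulAction.orbit B m₀, ENNReal.ofReal (ψ n m ^ 2)))
            + 4 * ((Λ.card : ℝ≥0∞) * ((K : ℝ≥0∞)
              * dirEnergy (fun y z : MulAction.orbit B m₀ =>
                  ∑ᶠ g ∈ {g : B | g • (y : M) = (z : M)}, ν g) (fun x => ψ n x - 1))) :=
            wr_core lam hpos (fun x => (πA x, πB x)) hπ oAct sA τ hcompat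
              (φ (k n)) (ψ n) _ _ _ (le_of_eq (hEA (k n))) (le_refl _) Λ hwin
              (hk n).2.2 (hτE n) hsumW
        _ ≤ 2 * ((n : ℝ≥0∞))⁻¹ + (4 * (Λ.card : ℝ≥0∞) * (K : ℝ≥0∞))
              * dirEnergy (fun y z : MulAction.orbit B m₀ =>
                  ∑ᶠ g ∈ {g : B | g • (y : M) = (z : M)}, ν g) (fun x => ψ n x - 1) := by
            refine add_le_add (mul_le_mul_right (hk n).2.1 2) (le_of_eq (by ring))
    have hlim : Tendsto (fun n : ℕ => 2 * ((n : ℝ≥0∞))⁻¹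
        + (4 * (Λ.card : ℝ≥0∞) * (K : ℝ≥0∞))
          * dirEnergy (fun y z : MulAction.orbit B m₀ =>
              ∑ᶠ g ∈ {g : B | g • (y : M) = (z : M)}, ν g) (fun x => ψ n x - 1))
        atTop (𝓝 0) := by
      have t1 : Tendsto (fun n : ℕ => 2 * ((n : ℝ≥0∞))⁻¹) atTop (𝓝 0) := by
        have := ENNReal.Tendsto.const_mul (a := (2 : ℝ≥0∞))
          ENNReal.tendsto_inv_nat_nhds_zero (Or.inr (by simp))
        simpa using this
      have hCne : (4 * (Λ.card : ℝ≥0∞) * (K : ℝ≥0∞)) ≠ ⊤ :=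
        ENNReal.mul_ne_top (ENNReal.mul_ne_top (by simp) (ENNReal.natCast_ne_top _))
          (ENNReal.natCast_ne_top _)
      have t2 : Tendsto (fun n : ℕ => (4 * (Λ.card : ℝ≥0∞) * (K : ℝ≥0∞))
          * dirEnergy (fun y z : MulAction.orbit B m₀ =>
              ∑ᶠ g ∈ {g : B | g • (y : M) = (z : M)}, ν g) (fun x => ψ n x - 1))
          atTop (𝓝 0) := by
        have := ENNReal.Tendsto.const_mul hψen (Or.inr hCne)
        simpa using this
      have := t1.add t2
      simpa using this
    exact tendsto_of_tendsto_of_tendsto_of_le_of_le tendsto_const_nhds hlim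
      (fun n => zero_le) hbound
end

section
/- Recurrence of group actions passes to subgroups and quotgot actions: if the action of a group A on a set L is recurrent and A' ≤ A, then the action of A' on L is recurrent; moreover, for a finitely generated group with finite symmetric generating set S, the action on L is recurrent if and only if the simple random walk on the Schreier graph Γ(A, S, L) is recurrent from every vertex. -/
open Filter Topology
open scoped ENNReal

lemma netRecurrent_of_finite {V : Type*} [Finite V] (a : V → V → ℝ) :
    netRecurrent a := by
  refine ⟨fun _ _ => 1, fun n => Set.toFinite _, fun x => tendsto_const_nhds, ?_⟩
  have h0 : ∀ n : ℕ, dirEnergy a (fun x => (fun (_ : ℕ) (_ : V) => (1:ℝ)) n x - 1) = 0 := by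
    intro n; unfold dirEnergy; simp
  exact (tendsto_const_nhds : Tendsto (fun _ : ℕ => (0:ℝ≥0∞)) atTop (𝓝 0)).congr
    fun n => (h0 n).symm

lemma netRecurrent_mono {V : Type*} {a b : V → V → ℝ} (M : ℝ≥0∞) (hM : M ≠ ⊤)
    (h : ∀ f : V → ℝ, dirEnergy b f ≤ M * dirEnergy a f) :
    netRecurrent a → netRecurrent b := by
  rintro ⟨u, h1, h2, h3⟩
  refine ⟨u, h1, h2, ?_⟩
  have hM0 : Tendsto (fun n => M * dirEnergy a (fun x => u n x - 1)) atTop (𝓝 (M * 0)) :=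
    ENNReal.Tendsto.const_mul h3 (Or.inr hM)
  rw [mul_zero] at hM0
  exact tendsto_of_tendsto_of_tendsto_of_le_of_le tendsto_const_nhds hM0
    (fun n => zero_le) (fun n => h _)

lemma dirEnergy_comp_le {V W : Type*} (a : V → V → ℝ) (ι : W → V)
    (hι : Function.Injective ι) (f : V → ℝ) :
    dirEnergy (fun y z => a (ι y) (ι z)) (fun w => f (ι w)) ≤ dirEnergy a f := by
  unfold dirEnergy
  calc ∑' (y : W), ∑' (z : W), ENNReal.ofReal (a (ι y) (ι z) * (f (ι y) - f (ι z)) ^ 2)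
      ≤ ∑' (y : W), ∑' (z : V), ENNReal.ofReal (a (ι y) z * (f (ι y) - f z) ^ 2) :=
        Summable.tsum_le_tsum (fun y => ENNReal.tsum_comp_le_tsum_of_injective hι _)
          ENNReal.summable ENNReal.summable
    _ ≤ _ := ENNReal.tsum_comp_le_tsum_of_injective hι _

lemma netRecurrent_comp {V W : Type*} {a : V → V → ℝ} (ι : W → V)
    (hι : Function.Injective ι) (h : netRecurrent a) :
    netRecurrent (fun y z => a (ι y) (ι z)) := by
  obtain ⟨u, h1, h2, h3⟩ := h
  refine ⟨fun n w => u n (ι w), fun n => ?_, fun w => h2 (ι w), ?_⟩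
  · have : Function.support (fun w => u n (ι w)) = ι ⁻¹' Function.support (u n) := rfl
    rw [this]
    exact (h1 n).preimage hι.injOn
  · refine tendsto_of_tendsto_of_tendsto_of_le_of_le tendsto_const_nhds h3
      (fun n => zero_le) (fun n => ?_)
    exact dirEnergy_comp_le a ι hι _

lemma dirEnergy_le_smul {V : Type*} {a b : V → V → ℝ} {M : ℝ} (hM : 0 ≤ M)
    (h : ∀ y z, b y z ≤ M * a y z) (f : V → ℝ) :
    dirEnergy b f ≤ ENNReal.ofReal M * dirEnergy a f := by
  unfold dirEnergy
  rw [← ENNReal.tsum_mul_left]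
  refine Summable.tsum_le_tsum (fun y => ?_) ENNReal.summable ENNReal.summable
  rw [← ENNReal.tsum_mul_left]
  refine Summable.tsum_le_tsum (fun z => ?_) ENNReal.summable ENNReal.summable
  rw [← ENNReal.ofReal_mul hM]
  refine ENNReal.ofReal_le_ofReal ?_
  have hd : (0:ℝ) ≤ (f y - f z) ^ 2 := sq_nonneg _
  nlinarith [h y z]

noncomputable def Phi {G V : Type*} [Group G] [MulAction G V] (f : V → ℝ) (g : G) : ℝ≥0∞ :=
  ∑' v : V, ENNReal.ofReal ((f (g • v) - f v) ^ 2)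

lemma Phi_translate {G V : Type*} [Group G] [MulAction G V] (f : V → ℝ) (g h : G) :
    ∑' v : V, ENNReal.ofReal ((f (g • (h • v)) - f (h • v)) ^ 2) = Phi f g :=
  (MulAction.toPerm (α := G) (β := V) h).tsum_eq
    (fun v => ENNReal.ofReal ((f (g • v) - f v) ^ 2))

lemma Phi_one {G V : Type*} [Group G] [MulAction G V] (f : V → ℝ) :
    Phi f (1 : G) = 0 := by
  unfold Phi; simp

lemma Phi_mul_le {G V : Type*} [Group G] [MulAction G V] (f : V → ℝ) (g h : G) :
    Phi f (g * h) ≤ 2 * Phi f g + 2 * Phi f h := by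
  have key : ∀ v : V, ENNReal.ofReal ((f ((g * h) • v) - f v) ^ 2) ≤
      2 * ENNReal.ofReal ((f (g • (h • v)) - f (h • v)) ^ 2)
        + 2 * ENNReal.ofReal ((f (h • v) - f v) ^ 2) := by
    intro v
    rw [mul_smul]
    calc ENNReal.ofReal ((f (g • h • v) - f v) ^ 2)
        ≤ ENNReal.ofReal (2 * (f (g • h • v) - f (h • v)) ^ 2 + 2 * (f (h • v) - f v) ^ 2) :=
          ENNReal.ofReal_le_ofReal (by nlinarith [sq_nonneg (f (g • h • v) - 2 * f (h • v) + f v)])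
      _ ≤ ENNReal.ofReal (2 * (f (g • h • v) - f (h • v)) ^ 2)
            + ENNReal.ofReal (2 * (f (h • v) - f v) ^ 2) := ENNReal.ofReal_add_le
      _ = 2 * ENNReal.ofReal ((f (g • h • v) - f (h • v)) ^ 2)
            + 2 * ENNReal.ofReal ((f (h • v) - f v) ^ 2) := by
          rw [ENNReal.ofReal_mul (by norm_num), ENNReal.ofReal_mul (by norm_num)]
          norm_num
  calc Phi f (g * h) ≤ ∑' v : V, (2 * ENNReal.ofReal ((f (g • (h • v)) - f (h • v)) ^ 2)
        + 2 * ENNReal.ofReal ((f (h • v) - f v) ^ 2)) :=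
        Summable.tsum_le_tsum key ENNReal.summable ENNReal.summable
    _ = 2 * (∑' v : V, ENNReal.ofReal ((f (g • (h • v)) - f (h • v)) ^ 2))
          + 2 * (∑' v : V, ENNReal.ofReal ((f (h • v) - f v) ^ 2)) := by
        rw [ENNReal.tsum_add, ENNReal.tsum_mul_left, ENNReal.tsum_mul_left]
    _ = 2 * Phi f g + 2 * Phi f h := by
        rw [Phi_translate]
        rfl

lemma Phi_word {G V : Type*} [Group G] [MulAction G V] (f : V → ℝ) {E : ℝ≥0∞}
    (l : List G) (hl : ∀ x ∈ l, Phi f x ≤ E) :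
    Phi f l.prod ≤ 4 ^ l.length * E := by
  induction l with
  | nil => simp [Phi_one]
  | cons s t ih =>
    have hs : Phi f s ≤ E := hl s (List.mem_cons_self)
    have ht : Phi f t.prod ≤ 4 ^ t.length * E := ih fun x hx => hl x (List.mem_cons_of_mem _ hx)
    have h1 : (1 : ℝ≥0∞) ≤ 4 ^ t.length := one_le_pow_of_one_le' (by norm_num) t.length
    calc Phi f (List.prod (s :: t)) = Phi f (s * t.prod) := by rw [List.prod_cons]
      _ ≤ 2 * Phi f s + 2 * Phi f t.prod := Phi_mul_le f s t.prod
      _ ≤ 2 * E + 2 * (4 ^ t.length * E) := add_le_add (mul_le_mul_right hs 2)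
          (mul_le_mul_right ht 2)
      _ ≤ 2 * (4 ^ t.length * E) + 2 * (4 ^ t.length * E) := by
          refine add_le_add_left (mul_le_mul_right ?_ 2) _
          calc E = 1 * E := (one_mul E).symm
            _ ≤ 4 ^ t.length * E := mul_le_mul_left h1 E
      _ = 4 ^ (s :: t).length * E := by
          rw [List.length_cons, pow_succ]
          ring

lemma Phi_le_dirEnergy {G V : Type*} [Group G] [MulAction G V] (a : V → V → ℝ) (f : V → ℝ)
    (g : G) (ha : ∀ v : V, 1 ≤ a v (g • v)) : Phi f g ≤ dirEnergy a f := by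
  unfold Phi dirEnergy
  refine Summable.tsum_le_tsum (fun v => ?_) ENNReal.summable ENNReal.summable
  calc ENNReal.ofReal ((f (g • v) - f v) ^ 2)
      ≤ ENNReal.ofReal (a v (g • v) * (f v - f (g • v)) ^ 2) :=
        ENNReal.ofReal_le_ofReal (by nlinarith [sq_nonneg (f v - f (g • v)), ha v])
    _ ≤ ∑' z : V, ENNReal.ofReal (a v z * (f v - f z) ^ 2) := ENNReal.le_tsum _

lemma dirEnergy_lam_eq {G Z : Type*} [Group G] [MulAction G Z] (lam : G → ℝ)
    (hfin : (Function.support lam).Finite) (hpos : ∀ g, 0 ≤ lam g) (z₀ : Z)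
    (f : MulAction.orbit G z₀ → ℝ) :
    dirEnergy (fun y z : MulAction.orbit G z₀ =>
        ∑ᶠ g ∈ {g : G | g • (y : Z) = (z : Z)}, lam g) f
      = ∑ g ∈ hfin.toFinset, ENNReal.ofReal (lam g) * Phi f g := by
  classical
  set Λ := hfin.toFinset with hΛ
  have key : ∀ (y z : MulAction.orbit G z₀), (∑ᶠ g ∈ {g : G | g • (y : Z) = (z : Z)}, lam g)
      = ∑ g ∈ Λ.filter (fun g => g • y = z), lam g := by
    intro y z
    rw [← finsum_mem_coe_finset]
    apply finsum_mem_inter_support_eq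
    ext g
    simp only [Set.mem_inter_iff, Set.mem_setOf_eq, Finset.coe_filter, Function.mem_support,
      hΛ, Set.Finite.mem_toFinset]
    constructor
    · rintro ⟨h1, h2⟩
      exact ⟨⟨h2, Subtype.ext h1⟩, h2⟩
    · rintro ⟨⟨h2, h1⟩, _⟩
      exact ⟨by rw [← h1]; rfl, h2⟩
  have inner : ∀ y : MulAction.orbit G z₀, (∑' z : MulAction.orbit G z₀,
        ENNReal.ofReal ((∑ᶠ g ∈ {g : G | g • (y : Z) = (z : Z)}, lam g) * (f y - f z) ^ 2))
      = ∑ g ∈ Λ, ENNReal.ofReal (lam g * (f y - f (g • y)) ^ 2) := by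
    intro y
    have hzero : ∀ z : MulAction.orbit G z₀, z ∉ Λ.image (fun g => g • y) →
        ENNReal.ofReal ((∑ᶠ g ∈ {g : G | g • (y : Z) = (z : Z)}, lam g) * (f y - f z) ^ 2)
          = 0 := by
      intro z hz
      have : Λ.filter (fun g => g • y = z) = ∅ := by
        rw [Finset.filter_eq_empty_iff]
        intro g hg hgz
        exact hz (Finset.mem_image.2 ⟨g, hg, hgz⟩)
      rw [key y z, this, Finset.sum_empty, zero_mul, ENNReal.ofReal_zero]
    rw [tsum_eq_sum hzero]
    have step : ∀ z ∈ Λ.image (fun g => g • y),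
        ENNReal.ofReal ((∑ᶠ g ∈ {g : G | g • (y : Z) = (z : Z)}, lam g) * (f y - f z) ^ 2)
          = ∑ g ∈ Λ.filter (fun g => g • y = z),
              ENNReal.ofReal (lam g * (f y - f (g • y)) ^ 2) := by
      intro z _
      rw [key y z, Finset.sum_mul, ENNReal.ofReal_sum_of_nonneg
        (fun g _ => mul_nonneg (hpos g) (sq_nonneg _))]
      refine Finset.sum_congr rfl fun g hg => ?_
      rw [(Finset.mem_filter.1 hg).2]
    rw [Finset.sum_congr rfl step]
    exact Finset.sum_fiberwise_of_maps_to (fun g hg => Finset.mem_image_of_mem _ hg) _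
  unfold dirEnergy
  beta_reduce
  rw [tsum_congr inner, Summable.tsum_finsetSum (fun g _ => ENNReal.summable)]
  refine Finset.sum_congr rfl fun g _ => ?_
  have : ∀ y : MulAction.orbit G z₀, ENNReal.ofReal (lam g * (f y - f (g • y)) ^ 2)
      = ENNReal.ofReal (lam g) * ENNReal.ofReal ((f (g • y) - f y) ^ 2) := by
    intro y
    rw [show (f y - f (g • y)) ^ 2 = (f (g • y) - f y) ^ 2 by ring, ENNReal.ofReal_mul (hpos g)]
  rw [tsum_congr this, ENNReal.tsum_mul_left]
  rfl

/-- Recurrence of actions passes to subgroups; and for a finite symmetric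
generating set `S`, recurrence of the action is equivalent to recurrence of
the simple random walk on every component of the Schreier graph. -/
theorem recurrent_action_subgroup_and_schreier {A L : Type*}
    [Group A] [MulAction A L] :
    (recurrentAction A L → ∀ A' : Subgroup A, recurrentAction ↥A' L) ∧
    (∀ S : Finset A, Subgroup.closure (S : Set A) = ⊤ → (∀ s ∈ S, s⁻¹ ∈ S) →
      (recurrentAction A L ↔
        ∀ l₀ : L, netRecurrent (fun y z : MulAction.orbit A l₀ =>
          (((S : Set A) ∩ {s : A | s • (y : L) = (z : L)}).ncard : ℝ)))) := by
  constructor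
  · -- Part 1: subgroups
    intro hrec A' lam hfin hpos hsym hsum z₀
    classical
    set lamA : A → ℝ := fun g => if h : g ∈ A' then lam ⟨g, h⟩ else 0 with hlamA
    have hmem : ∀ g : A, lamA g ≠ 0 → g ∈ A' := by
      intro g hg
      by_contra h
      exact hg (by simp [hlamA, h])
    have hfinA : (Function.support lamA).Finite := by
      refine Set.Finite.subset (hfin.image ((↑) : ↥A' → A)) ?_
      intro g hg
      rw [Function.mem_support] at hg
      have h := hmem g hg
      exact ⟨⟨g, h⟩, by simpa [hlamA, h] using hg, rfl⟩
    have hposA : ∀ g, 0 ≤ lamA g := by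
      intro g
      by_cases h : g ∈ A' <;> simp [hlamA, h, hpos]
    have hsymA : ∀ g, lamA g⁻¹ = lamA g := by
      intro g
      by_cases h : g ∈ A'
      · have h' : g⁻¹ ∈ A' := inv_mem h
        have he : (⟨g⁻¹, h'⟩ : ↥A') = (⟨g, h⟩ : ↥A')⁻¹ := rfl
        simp only [hlamA, dif_pos h, dif_pos h', he, hsym]
      · have h' : g⁻¹ ∉ A' := fun hh => h (by simpa using inv_mem hh)
        simp [hlamA, h, h']
    have hsumA : (∑ᶠ g, lamA g) = 1 := by
      rw [← hsum]
      have h1 : ∑ᶠ g, lamA g = ∑ᶠ g ∈ Set.range ((↑) : ↥A' → A), lamA g := by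
        rw [← finsum_mem_univ (f := lamA)]
        apply finsum_mem_inter_support_eq
        ext g
        simp only [Set.mem_inter_iff, Set.mem_univ, true_and, Function.mem_support, Set.mem_range]
        exact ⟨fun hg => ⟨⟨⟨g, hmem g hg⟩, rfl⟩, hg⟩, fun h => h.2⟩
      rw [h1, finsum_mem_range Subtype.coe_injective]
      exact finsum_congr fun h => by simp [hlamA, h.2]
    have hcond : ∀ x x' : L, (∑ᶠ g ∈ {g : A | g • x = x'}, lamA g)
        = ∑ᶠ h ∈ {h : ↥A' | h • x = x'}, lam h := by
      intro x x'
      have h1 : ∑ᶠ g ∈ {g : A | g • x = x'}, lamA g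
          = ∑ᶠ g ∈ ((↑) : ↥A' → A) '' {h : ↥A' | (h : A) • x = x'}, lamA g := by
        apply finsum_mem_inter_support_eq
        ext g
        simp only [Set.mem_inter_iff, Set.mem_setOf_eq, Function.mem_support, Set.mem_image]
        constructor
        · rintro ⟨h1, h2⟩
          exact ⟨⟨⟨g, hmem g h2⟩, h1, rfl⟩, h2⟩
        · rintro ⟨⟨h, hh, rfl⟩, h2⟩
          exact ⟨hh, h2⟩
      rw [h1, finsum_mem_image Subtype.coe_injective.injOn]
      exact finsum_mem_congr rfl fun h _ => by simp [hlamA, h.2]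
    have horb := hrec lamA hfinA hposA hsymA hsumA z₀
    have hιinj : Function.Injective (fun w : MulAction.orbit A' z₀ =>
        (⟨(w : L), MulAction.orbit_subgroup_subset A' z₀ w.2⟩ : MulAction.orbit A z₀)) :=
      fun w w' hww => by
        apply Subtype.ext
        have := congrArg (Subtype.val : MulAction.orbit A z₀ → L) hww
        exact this
    have hres := netRecurrent_comp _ hιinj horb
    have hfun : (fun y z : MulAction.orbit A' z₀ =>
        ∑ᶠ h ∈ {h : ↥A' | h • (y : L) = (z : L)}, lam h)
        = fun y z : MulAction.orbit A' z₀ =>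
          ∑ᶠ g ∈ {g : A | g • ((⟨(y : L), MulAction.orbit_subgroup_subset A' z₀ y.2⟩ :
            MulAction.orbit A z₀) : L) = ((⟨(z : L), MulAction.orbit_subgroup_subset A' z₀ z.2⟩ :
            MulAction.orbit A z₀) : L)}, lamA g := by
      funext y z
      exact (hcond _ _).symm
    rw [hfun]
    exact hres
  · -- Part 2: Schreier graphs
    intro S hgen hsymS
    rcases S.eq_empty_or_nonempty with rfl | hS
    · -- degenerate case : A is trivial
      have htriv : ∀ g : A, g = 1 := by
        intro g
        have hg : g ∈ Subgroup.closure ((∅ : Finset A) : Set A) := by rw [hgen]; trivial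
        rw [Finset.coe_empty, Subgroup.closure_empty, Subgroup.mem_bot] at hg
        exact hg
      have hsub : ∀ l₀ : L, Subsingleton (MulAction.orbit A l₀) := by
        intro l₀
        constructor
        rintro ⟨x, hx⟩ ⟨y, hy⟩
        obtain ⟨g, rfl⟩ := MulAction.mem_orbit_iff.1 hx
        obtain ⟨g', rfl⟩ := MulAction.mem_orbit_iff.1 hy
        exact Subtype.ext (show g • l₀ = g' • l₀ by rw [htriv g, htriv g'])
      constructor
      · intro _ l₀
        have := hsub l₀
        have : Finite (MulAction.orbit A l₀) := Finite.of_subsingleton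
        exact netRecurrent_of_finite _
      · intro _ lam hfin hpos hsym hsum z₀
        have := hsub z₀
        have : Finite (MulAction.orbit A z₀) := Finite.of_subsingleton
        exact netRecurrent_of_finite _
    · -- main case
      classical
      have hcard : (0 : ℝ) < (S.card : ℝ) := by exact_mod_cast Finset.card_pos.2 hS
      constructor
      · -- recurrent action → Schreier recurrent
        intro hrec l₀
        set lam : A → ℝ := fun g => if g ∈ S then (S.card : ℝ)⁻¹ else 0 with hlam
        have hsuppS : Function.support lam ⊆ (S : Set A) := by
          intro g hg
          rw [Function.mem_support] at hg
          by_contra hgS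
          rw [Finset.mem_coe] at hgS
          exact hg (by simp [hlam, hgS])
        have hfin : (Function.support lam).Finite := Set.Finite.subset S.finite_toSet hsuppS
        have hpos : ∀ g, 0 ≤ lam g := by
          intro g
          by_cases h : g ∈ S <;> simp [hlam, h, le_of_lt (inv_pos.2 hcard)]
        have hsymiff : ∀ g : A, g⁻¹ ∈ S ↔ g ∈ S :=
          fun g => ⟨fun h => by simpa using hsymS _ h, fun h => hsymS g h⟩
        have hsym : ∀ g, lam g⁻¹ = lam g := by
          intro g
          by_cases h : g ∈ S
          · simp [hlam, h, (hsymiff g).2 h]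
          · have h' : g⁻¹ ∉ S := fun hh => h ((hsymiff g).1 hh)
            simp [hlam, h, h']
        have hsum : (∑ᶠ g, lam g) = 1 := by
          rw [finsum_eq_sum_of_support_subset lam hsuppS]
          rw [Finset.sum_congr rfl (fun g hg => if_pos hg), Finset.sum_const, nsmul_eq_mul]
          exact mul_inv_cancel₀ hcard.ne'
        have key : ∀ y z : MulAction.orbit A l₀,
            (∑ᶠ g ∈ {g : A | g • (y : L) = (z : L)}, lam g)
              = (((S : Set A) ∩ {s : A | s • (y : L) = (z : L)}).ncard : ℝ) * (S.card : ℝ)⁻¹ := by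
          intro y z
          have hU : ((S : Set A) ∩ {s : A | s • (y : L) = (z : L)}).Finite :=
            S.finite_toSet.inter_of_left _
          have h1 : ∑ᶠ g ∈ {g : A | g • (y : L) = (z : L)}, lam g
              = ∑ᶠ g ∈ (S : Set A) ∩ {s : A | s • (y : L) = (z : L)}, lam g := by
            apply finsum_mem_inter_support_eq
            ext g
            simp only [Set.mem_inter_iff, Set.mem_setOf_eq, Function.mem_support]
            constructor
            · rintro ⟨h1, h2⟩
              exact ⟨⟨hsuppS h2, h1⟩, h2⟩
            · rintro ⟨⟨_, h1⟩, h2⟩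
              exact ⟨h1, h2⟩
          rw [h1, finsum_mem_congr rfl (fun g hg => if_pos hg.1),
            finsum_mem_eq_finite_toFinset_sum _ hU, Finset.sum_const, nsmul_eq_mul,
            Set.ncard_eq_toFinset_card _ hU]
        have horb := hrec lam hfin hpos hsym hsum l₀
        refine netRecurrent_mono (ENNReal.ofReal (S.card : ℝ)) ENNReal.ofReal_ne_top
          (fun f => dirEnergy_le_smul hcard.le (fun y z => ?_) f) horb
        rw [key y z]
        exact le_of_eq (by rw [mul_comm _ ((S.card : ℝ)⁻¹), ← mul_assoc,
          mul_inv_cancel₀ hcard.ne', one_mul])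
      · -- Schreier recurrent → recurrent action
        intro hsch lam hfin hpos hsym hsum z₀
        have hword : ∀ g : A, ∃ l : List A, (∀ x ∈ l, x ∈ S) ∧ l.prod = g := by
          intro g
          have hg : g ∈ Submonoid.closure ((S : Set A) ∪ (S : Set A)⁻¹) := by
            have hg' : g ∈ (Subgroup.closure (S : Set A)).toSubmonoid := by rw [hgen]; trivial
            rwa [Subgroup.closure_toSubmonoid] at hg'
          obtain ⟨l, hl, hlp⟩ := Submonoid.exists_list_of_mem_closure hg
          refine ⟨l, fun x hx => ?_, hlp⟩
          rcases hl x hx with h | h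
          · exact h
          · have hxS : x⁻¹ ∈ S := Set.mem_inv.1 h
            simpa using hsymS _ hxS
        choose w hwS hwprod using hword
        have hPhiS : ∀ (f : MulAction.orbit A z₀ → ℝ) (s : A), s ∈ S →
            Phi f s ≤ dirEnergy (fun y z : MulAction.orbit A z₀ =>
              (((S : Set A) ∩ {t : A | t • (y : L) = (z : L)}).ncard : ℝ)) f := by
          intro f s hs
          apply Phi_le_dirEnergy
          intro v
          have hfin' : ((S : Set A) ∩
              {t : A | t • (v : L) = ((s • v : MulAction.orbit A z₀) : L)}).Finite :=
            S.finite_toSet.inter_of_left _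
          have hne : ((S : Set A) ∩
              {t : A | t • (v : L) = ((s • v : MulAction.orbit A z₀) : L)}).Nonempty :=
            ⟨s, hs, rfl⟩
          have h1 : 1 ≤ ((S : Set A) ∩
              {t : A | t • (v : L) = ((s • v : MulAction.orbit A z₀) : L)}).ncard :=
            (Set.ncard_pos hfin').2 hne
          exact_mod_cast h1
        set M : ℝ≥0∞ := ∑ g ∈ hfin.toFinset, ENNReal.ofReal (lam g) * 4 ^ (w g).length with hM
        have hMne : M ≠ ⊤ := by
          rw [hM]
          refine (ENNReal.sum_lt_top.2 fun g _ => ?_).ne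
          exact ENNReal.mul_lt_top ENNReal.ofReal_lt_top
            (ENNReal.pow_lt_top (by norm_num))
        refine netRecurrent_mono M hMne (fun f => ?_) (hsch z₀)
        rw [dirEnergy_lam_eq lam hfin hpos z₀ f, hM, Finset.sum_mul]
        refine Finset.sum_le_sum fun g hg => ?_
        rw [mul_assoc]
        refine mul_le_mul_right ?_ _
        calc Phi f g = Phi f (w g).prod := by rw [hwprod]
          _ ≤ 4 ^ (w g).length * dirEnergy (fun y z : MulAction.orbit A z₀ =>
                (((S : Set A) ∩ {t : A | t • (y : L) = (z : L)}).ncard : ℝ)) f :=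
            Phi_word f (w g) (fun x hx => hPhiS f x (hwS g x hx))
end
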